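/- arXiv:1510.03925 — 5 statements merged into one kernel-verified Lean document; each statement's English description precedes it below -/
import Mathlib

section
/- Let Z_1,...,Z_n be a martingale difference sequence in a Hilbert space (or a Banach space paired with its dual) with ‖Z_t‖ ≤ M_t almost surely, and let ŷ_1,...,ŷ_n be a predictable process (ŷ_t measurable with respect to σ(Z_1,...,Z_{t-1})) with ‖ŷ_t‖_* ≤ 1. Set A = ∑_{t=1}^n ⟨ŷ_t, Z_t⟩ and B² = 4∑_{t=1}^n (‖Z_t‖² + E[‖Z_t‖² | Z_1,...,Z_{t-1}]). Then E[exp(λA - λ²B²/2)] ≤ 1 for all λ ∈ R. -/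
/-!
With `X_t = λ⟨ŷ_t, Z_t⟩ - 2λ²(‖Z_t‖² + c_t)` and `c_t = E[‖Z_t‖² | past]`, the exponent is
`∑ X_t`. The elementary bound `exp (v - 2v²) ≤ 1 + v + 2v²`, applied to `v = λ⟨ŷ_t, Z_t⟩`
(so `v² ≤ λ²‖Z_t‖²`), together with the vanishing conditional mean of `⟨ŷ_t, Z_t⟩` for predictable
`ŷ_t`, gives `E[exp X_t | past] ≤ e^{-2λ²c_t} (1 + 2λ²c_t) ≤ 1`. Hence `exp (∑ X_t)` is a
nonnegative supermartingale started at `1`, and its expectation is at most `1`.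
-/

open MeasureTheory Finset

theorem Real.exp_mul_sub_le_one_add {a q : ℝ} (l : ℝ) (h : a ^ 2 ≤ q) :
    Real.exp (l * a - 2 * l ^ 2 * q) ≤ 1 + l * a + 2 * l ^ 2 * q := by
  set v := l * a
  have hv : v ^ 2 ≤ l ^ 2 * q := by
    rw [show v ^ 2 = l ^ 2 * a ^ 2 by ring]; exact mul_le_mul_of_nonneg_left h (sq_nonneg l)
  set w := v - 2 * v ^ 2
  -- `exp w ≤ 1 / (1 - w)` and `(1 - w) (1 + v + 2 v²) = 1 + 3 v² + 4 v⁴ ≥ 1`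
  have hw : Real.exp w ≤ 1 + v + 2 * v ^ 2 := by
    have h1 := Real.add_one_le_exp (-w)
    have h2 : Real.exp w * Real.exp (-w) = 1 := by rw [← Real.exp_add]; simp
    have h3 : 1 ≤ (1 - w) * (1 + v + 2 * v ^ 2) := by
      nlinarith [sq_nonneg v, sq_nonneg (v ^ 2)]
    have h4 : 0 ≤ 1 + v + 2 * v ^ 2 := by nlinarith [sq_nonneg (v + 1 / 4)]
    nlinarith [Real.exp_pos w, mul_le_mul_of_nonneg_left h1 (Real.exp_pos w).le]
  calc Real.exp (v - 2 * l ^ 2 * q) ≤ Real.exp w := Real.exp_le_exp.2 (by linarith)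
    _ ≤ 1 + v + 2 * v ^ 2 := hw
    _ ≤ 1 + v + 2 * l ^ 2 * q := by linarith

theorem integral_exp_sum_le_one {Ω : Type*} {m0 : MeasurableSpace Ω} {μ : Measure Ω}
    [IsProbabilityMeasure μ] {ℱ : Filtration ℕ m0} {X : ℕ → Ω → ℝ} {C : ℕ → ℝ}
    (hX : ∀ t, StronglyMeasurable[ℱ (t + 1)] (X t)) (hXC : ∀ t, ∀ᵐ ω ∂μ, X t ω ≤ C t)
    (hcond : ∀ t, μ[fun ω => Real.exp (X t ω) | ℱ t] ≤ᵐ[μ] 1) (n : ℕ) :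
    ∫ ω, Real.exp (∑ t ∈ range n, X t ω) ∂μ ≤ 1 := by
  induction n with
  | zero => simp
  | succ N ih =>
    set G : Ω → ℝ := fun ω => Real.exp (∑ t ∈ range N, X t ω)
    have hG : StronglyMeasurable[ℱ N] G :=
      Real.continuous_exp.comp_stronglyMeasurable (stronglyMeasurable_fun_sum _
        fun t ht => (hX t).mono (ℱ.mono (mem_range.1 ht)))
    have hG_le : ∀ᵐ ω ∂μ, ‖G ω‖ ≤ Real.exp (∑ t ∈ range N, C t) := by
      filter_upwards [ae_all_iff.2 hXC] with ω hω
      rw [Real.norm_eq_abs, abs_of_pos (Real.exp_pos _), Real.exp_le_exp]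
      exact sum_le_sum fun t _ => hω t
    have hexpX : Integrable (fun ω => Real.exp (X N ω)) μ := by
      refine .of_bound (Real.continuous_exp.comp_stronglyMeasurable
        ((hX N).mono (ℱ.le _))).aestronglyMeasurable (Real.exp (C N)) ?_
      filter_upwards [hXC N] with ω hω
      rw [Real.norm_eq_abs, abs_of_pos (Real.exp_pos _)]
      exact Real.exp_le_exp.2 hω
    have hGX : Integrable (G * fun ω => Real.exp (X N ω)) μ :=
      hexpX.bdd_mul ((hG.mono (ℱ.le N)).aestronglyMeasurable) hG_le
    calc ∫ ω, Real.exp (∑ t ∈ range (N + 1), X t ω) ∂μ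
        = ∫ ω, (G * fun ω => Real.exp (X N ω)) ω ∂μ := by
          simp only [sum_range_succ, Real.exp_add, Pi.mul_apply, G]
      _ = ∫ ω, G ω * μ[fun ω => Real.exp (X N ω) | ℱ N] ω ∂μ := by
          rw [← integral_condExp (ℱ.le N)]
          exact integral_congr_ae (condExp_mul_of_stronglyMeasurable_left hG hGX hexpX)
      _ ≤ ∫ ω, G ω ∂μ := by
          refine integral_mono_ae (integrable_condExp.bdd_mul
            (hG.mono (ℱ.le N)).aestronglyMeasurable hG_le)
            (.of_bound (hG.mono (ℱ.le N)).aestronglyMeasurable _ hG_le) ?_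
          filter_upwards [hcond N] with ω hω
          exact mul_le_of_le_one_right (Real.exp_pos _).le hω
      _ ≤ 1 := ih

/-- With `X t = pairingIncrement μ (ℱ t) l (ŷ (t + 1)) (Z (t + 1))`, the exponent of the theorem is
`λ A - λ² B² / 2 = ∑ t, X t`. -/
noncomputable def pairingIncrement {Ω E : Type*} [NormedAddCommGroup E] [NormedSpace ℝ E]
    {m0 : MeasurableSpace Ω} (μ : Measure Ω) (m : MeasurableSpace Ω) (l : ℝ)
    (y : Ω → StrongDual ℝ E) (Z : Ω → E) (ω : Ω) : ℝ :=
  l * y ω (Z ω) - 2 * l ^ 2 * (‖Z ω‖ ^ 2 + μ[fun ω' => ‖Z ω'‖ ^ 2 | m] ω)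

theorem abs_apply_le_of_norm_le_one {E : Type*} [NormedAddCommGroup E] [NormedSpace ℝ E]
    {y : StrongDual ℝ E} (hy : ‖y‖ ≤ 1) (z : E) : |y z| ≤ ‖z‖ :=
  (y.le_of_opNorm_le hy z).trans_eq (one_mul _)

section

variable {Ω : Type*} {m m0 : MeasurableSpace Ω} {μ : Measure Ω}
  {E : Type*} [NormedAddCommGroup E] [NormedSpace ℝ E] {y : Ω → StrongDual ℝ E} {Z : Ω → E}

theorem integrable_apply_of_norm_le_one (hy : AEStronglyMeasurable y μ) (hy1 : ∀ ω, ‖y ω‖ ≤ 1)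
    (hZ : Integrable Z μ) : Integrable (fun ω => y ω (Z ω)) μ :=
  hZ.norm.mono' (isBoundedBilinearMap_apply.continuous.comp_aestronglyMeasurable
    (hy.prodMk hZ.1)) (.of_forall fun ω => abs_apply_le_of_norm_le_one (hy1 ω) (Z ω))

theorem condExp_apply_ae_eq_zero [CompleteSpace E] (hy : StronglyMeasurable[m] y)
    (hyZ : Integrable (fun ω => y ω (Z ω)) μ) (hZ : Integrable Z μ) (hZ0 : μ[Z | m] =ᵐ[μ] 0) :
    μ[fun ω => y ω (Z ω) | m] =ᵐ[μ] 0 := by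
  filter_upwards [condExp_bilin_of_stronglyMeasurable_left (.id ℝ (StrongDual ℝ E)) hy hyZ hZ,
    hZ0] with ω h h0
  simpa [h0] using h

theorem condExp_const_add_mul_add_mul_ae_eq [IsFiniteMeasure μ] (hm : m ≤ m0) {a q : Ω → ℝ}
    (ha : Integrable a μ) (ha0 : μ[a | m] =ᵐ[μ] 0) (hq : Integrable q μ) (b l k : ℝ) :
    μ[fun ω => b + l * a ω + k * q ω | m] =ᵐ[μ] fun ω => b + k * μ[q | m] ω := by
  have hlin : (fun ω => b + l * a ω + k * q ω) = (fun _ => b) + l • a + k • q := rfl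
  filter_upwards [condExp_add ((integrable_const _).add (ha.smul l)) (hq.smul k) m,
    condExp_add (integrable_const _) (ha.smul l) m, condExp_smul l a m, condExp_smul k q m,
    ha0] with ω h1 h2 h3 h4 h5
  rw [hlin, h1, Pi.add_apply, h2, Pi.add_apply, h3, h4, condExp_const hm]
  simp [h5]

theorem exp_pairingIncrement_le (hy1 : ∀ ω, ‖y ω‖ ≤ 1) (l : ℝ) (ω : Ω) :
    Real.exp (pairingIncrement μ m l y Z ω) ≤ Real.exp (-(2 * l ^ 2 * μ[fun ω => ‖Z ω‖ ^ 2 | m] ω))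
      * (1 + l * y ω (Z ω) + 2 * l ^ 2 * ‖Z ω‖ ^ 2) := by
  have hyZ := abs_le.1 (abs_apply_le_of_norm_le_one (hy1 ω) (Z ω))
  calc Real.exp (pairingIncrement μ m l y Z ω)
      = Real.exp (-(2 * l ^ 2 * μ[fun ω => ‖Z ω‖ ^ 2 | m] ω))
        * Real.exp (l * y ω (Z ω) - 2 * l ^ 2 * ‖Z ω‖ ^ 2) := by
        rw [pairingIncrement, ← Real.exp_add]; ring_nf
    _ ≤ _ := mul_le_mul_of_nonneg_left
        (Real.exp_mul_sub_le_one_add l (sq_le_sq' hyZ.1 hyZ.2)) (Real.exp_pos _).le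

theorem condExp_exp_pairingIncrement_le_one [CompleteSpace E] [IsFiniteMeasure μ] (hm : m ≤ m0)
    (hZ : Integrable Z μ) (hZ0 : μ[Z | m] =ᵐ[μ] 0) {M : ℝ} (hZM : ∀ᵐ ω ∂μ, ‖Z ω‖ ≤ M)
    (hy : StronglyMeasurable[m] y) (hy1 : ∀ ω, ‖y ω‖ ≤ 1) (l : ℝ) :
    μ[fun ω => Real.exp (pairingIncrement μ m l y Z ω) | m] ≤ᵐ[μ] 1 := by
  set q : Ω → ℝ := fun ω => ‖Z ω‖ ^ 2
  set c := μ[q | m]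
  set a : Ω → ℝ := fun ω => y ω (Z ω)
  set D : Ω → ℝ := fun ω => Real.exp (-(2 * l ^ 2 * c ω))
  set P : Ω → ℝ := fun ω => 1 + l * a ω + 2 * l ^ 2 * q ω
  have ha : Integrable a μ :=
    integrable_apply_of_norm_le_one (hy.mono hm).aestronglyMeasurable hy1 hZ
  have hq : Integrable q μ := by
    refine .of_bound (hZ.1.norm.pow 2) (M ^ 2) ?_
    filter_upwards [hZM] with ω hω
    rw [Real.norm_eq_abs, abs_of_nonneg (by positivity)]
    exact pow_le_pow_left₀ (norm_nonneg _) hω 2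
  have hP : Integrable P μ := ((integrable_const 1).add (ha.const_mul l)).add (hq.const_mul _)
  have hc_nonneg : 0 ≤ᵐ[μ] c := condExp_nonneg (.of_forall fun ω => by positivity)
  have hD : StronglyMeasurable[m] D :=
    Real.continuous_exp.comp_stronglyMeasurable (stronglyMeasurable_condExp.const_mul _).neg
  have hD_le : ∀ᵐ ω ∂μ, ‖D ω‖ ≤ 1 := by
    filter_upwards [hc_nonneg] with ω hω
    rw [Real.norm_eq_abs, abs_of_pos (Real.exp_pos _), Real.exp_le_one_iff, neg_nonpos]
    exact mul_nonneg (by positivity) hω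
  have hDP : Integrable (D * P) μ := hP.bdd_mul (hD.mono hm).aestronglyMeasurable hD_le
  have hexp_le : ∀ ω, Real.exp (pairingIncrement μ m l y Z ω) ≤ (D * P) ω :=
    exp_pairingIncrement_le hy1 l
  have hexp_int : Integrable (fun ω => Real.exp (pairingIncrement μ m l y Z ω)) μ :=
    hDP.mono' (Real.continuous_exp.comp_aestronglyMeasurable
      ((ha.1.const_mul l).sub ((hq.1.add integrable_condExp.1).const_mul _)))
      (.of_forall fun ω => by rw [Real.norm_eq_abs, abs_of_pos (Real.exp_pos _)]; exact hexp_le ω)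
  calc μ[fun ω => Real.exp (pairingIncrement μ m l y Z ω) | m]
      ≤ᵐ[μ] μ[D * P | m] := condExp_mono hexp_int hDP (.of_forall hexp_le)
    _ =ᵐ[μ] D * μ[P | m] := condExp_mul_of_stronglyMeasurable_left hD hDP hP
    _ ≤ᵐ[μ] 1 := by
      filter_upwards [condExp_const_add_mul_add_mul_ae_eq hm ha
        (condExp_apply_ae_eq_zero hy ha hZ hZ0) hq 1 l (2 * l ^ 2), hc_nonneg] with ω hω hcω
      simp only [Pi.mul_apply, D, Pi.one_apply]
      -- `(1 + x) e^{-x} ≤ 1` with `x = 2 λ² c`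
      rw [Real.exp_neg, inv_mul_le_one₀ (Real.exp_pos _)]
      linarith [Real.add_one_le_exp (2 * l ^ 2 * c ω)]

theorem stronglyMeasurable_pairingIncrement {m' : MeasurableSpace Ω} (hmm' : m ≤ m')
    (hy : StronglyMeasurable[m] y) (hZ : StronglyMeasurable[m'] Z) (l : ℝ) :
    StronglyMeasurable[m'] (pairingIncrement μ m l y Z) :=
  (((isBoundedBilinearMap_apply.continuous.comp_stronglyMeasurable
    ((hy.mono hmm').prodMk hZ)).const_mul l).sub
    (((hZ.norm.pow 2).add (stronglyMeasurable_condExp.mono hmm')).const_mul _))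

theorem pairingIncrement_le {M : ℝ} (hZM : ∀ᵐ ω ∂μ, ‖Z ω‖ ≤ M) (hy1 : ∀ ω, ‖y ω‖ ≤ 1) (l : ℝ) :
    ∀ᵐ ω ∂μ, pairingIncrement μ m l y Z ω ≤ |l| * M := by
  have hc : 0 ≤ᵐ[μ] μ[fun ω => ‖Z ω‖ ^ 2 | m] :=
    condExp_nonneg (.of_forall fun ω => by positivity)
  filter_upwards [hZM, hc] with ω hω hcω
  have : 0 ≤ 2 * l ^ 2 * (‖Z ω‖ ^ 2 + μ[fun ω => ‖Z ω‖ ^ 2 | m] ω) :=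
    mul_nonneg (by positivity) (add_nonneg (sq_nonneg _) hcω)
  calc pairingIncrement μ m l y Z ω ≤ |l| * |y ω (Z ω)| := by
        rw [pairingIncrement, ← abs_mul]; linarith [le_abs_self (l * y ω (Z ω))]
    _ ≤ |l| * M := mul_le_mul_of_nonneg_left
        ((abs_apply_le_of_norm_le_one (hy1 ω) (Z ω)).trans hω) (abs_nonneg l)

end

theorem stmt6_general {Ω : Type*} {m0 : MeasurableSpace Ω} (μ : Measure Ω)
    [IsProbabilityMeasure μ]
    {E : Type*} [NormedAddCommGroup E] [NormedSpace ℝ E] [CompleteSpace E]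
    (ℱ : Filtration ℕ m0) (n : ℕ)
    (Z : ℕ → Ω → E) (M : ℕ → ℝ)
    (hadapt : ∀ t, StronglyMeasurable[ℱ (t + 1)] (Z (t + 1)))
    (hint : ∀ t, Integrable (Z (t + 1)) μ)
    (hmds : ∀ t, μ[Z (t + 1) | ℱ t] =ᵐ[μ] 0)
    (hbdd : ∀ t, ∀ᵐ ω ∂μ, ‖Z (t + 1) ω‖ ≤ M t)
    (yhat : ℕ → Ω → StrongDual ℝ E)
    (hpred : ∀ t, StronglyMeasurable[ℱ t] (yhat (t + 1)))
    (hyball : ∀ t ω, ‖yhat (t + 1) ω‖ ≤ 1) :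
    ∀ l : ℝ,
      ∫ ω, Real.exp (l * (∑ t ∈ Finset.range n, yhat (t + 1) ω (Z (t + 1) ω))
        - l ^ 2 * (4 * ∑ t ∈ Finset.range n,
            (‖Z (t + 1) ω‖ ^ 2 + (μ[fun ω' => ‖Z (t + 1) ω'‖ ^ 2 | ℱ t]) ω)) / 2) ∂μ
        ≤ 1 := by
  intro l
  have key := integral_exp_sum_le_one (μ := μ) (ℱ := ℱ) (C := fun t => |l| * M t)
    (X := fun t => pairingIncrement μ (ℱ t) l (yhat (t + 1)) (Z (t + 1)))
    (fun t => stronglyMeasurable_pairingIncrement (ℱ.mono t.le_succ) (hpred t) (hadapt t) l)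
    (fun t => pairingIncrement_le (hbdd t) (hyball t) l)
    (fun t => condExp_exp_pairingIncrement_le_one (ℱ.le t) (hint t) (hmds t) (hbdd t)
      (hpred t) (hyball t) l) n
  refine (integral_congr_ae (.of_forall fun ω => ?_)).trans_le key
  simp only [pairingIncrement, sum_sub_distrib, ← mul_sum]
  congr 1
  ring

/-- The canonical exponential moment condition for the pair `(A, B)` built from a bounded
martingale difference sequence `Z` in a separable Banach space and a predictable process
`yhat` in the dual unit ball: with `A = ∑ ⟨yhat_t, Z_t⟩` and
`B² = 4 ∑ (‖Z_t‖² + E[‖Z_t‖² | past])`, one has `E[exp(λA - λ²B²/2)] ≤ 1` for all `λ`. -/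
theorem stmt6 {Ω : Type*} {m0 : MeasurableSpace Ω} (μ : Measure Ω)
    [IsProbabilityMeasure μ]
    {E : Type*} [NormedAddCommGroup E] [NormedSpace ℝ E] [CompleteSpace E]
    [MeasurableSpace E] [BorelSpace E] [SecondCountableTopology E]
    (ℱ : Filtration ℕ m0) (n : ℕ)
    (Z : ℕ → Ω → E) (M : ℕ → ℝ)
    (hadapt : ∀ t, StronglyMeasurable[ℱ (t + 1)] (Z (t + 1)))
    (hint : ∀ t, Integrable (Z (t + 1)) μ)
    (hmds : ∀ t, μ[Z (t + 1) | ℱ t] =ᵐ[μ] 0)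
    (hbdd : ∀ t, ∀ᵐ ω ∂μ, ‖Z (t + 1) ω‖ ≤ M t)
    (yhat : ℕ → Ω → StrongDual ℝ E)
    (hpred : ∀ t, StronglyMeasurable[ℱ t] (yhat (t + 1)))
    (hyball : ∀ t ω, ‖yhat (t + 1) ω‖ ≤ 1) :
    ∀ l : ℝ,
      ∫ ω, Real.exp (l * (∑ t ∈ Finset.range n, yhat (t + 1) ω (Z (t + 1) ω))
        - l ^ 2 * (4 * ∑ t ∈ Finset.range n,
            (‖Z (t + 1) ω‖ ^ 2 + (μ[fun ω' => ‖Z (t + 1) ω'‖ ^ 2 | ℱ t]) ω)) / 2) ∂μ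
        ≤ 1 :=
  stmt6_general μ ℱ n Z M hadapt hint hmds hbdd yhat hpred hyball
end

section
/- Let ŷ_1,...,ŷ_n be a real-valued predictable process with respect to the dyadic filtration generated by i.i.d. Rademacher variables ε_1,...,ε_n, with |ŷ_t| ≤ 1 almost surely, and let α > 0. Then for every u > 0, P(∑_{t=1}^n (ε_t ŷ_t - α ŷ_t²) > u) ≤ exp(-2αu). -/
open Finset

def sgn (b : Bool) : ℝ := if b then 1 else -1

def Predictable {n : ℕ} {X : Type*} (x : Fin n → (Fin n → Bool) → X) : Prop :=
  ∀ (t : Fin n) (e e' : Fin n → Bool), (∀ s : Fin n, s < t → e s = e' s) → x t e = x t e'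

/-- two-point MGF bound: exp(2α(c - αc²)) + exp(2α(-c - αc²)) ≤ 2 -/
lemma two_point (α c : ℝ) :
    Real.exp (2*α * (c - α * c^2)) + Real.exp (2*α * (-c - α * c^2)) ≤ 2 := by
  have h := Real.cosh_le_exp_half_sq (2*α*c)
  rw [Real.cosh_eq] at h
  have h2 : Real.exp (2*α*c) + Real.exp (-(2*α*c)) ≤ 2 * Real.exp ((2*α*c)^2/2) := by
    nlinarith [Real.exp_pos ((2*α*c)^2/2)]
  have e1 : Real.exp (2*α * (c - α * c^2))
      = Real.exp (2*α*c) * Real.exp (-(2*α^2*c^2)) := by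
    rw [← Real.exp_add]; ring_nf
  have e2 : Real.exp (2*α * (-c - α * c^2))
      = Real.exp (-(2*α*c)) * Real.exp (-(2*α^2*c^2)) := by
    rw [← Real.exp_add]; ring_nf
  have e3 : (2*α*c)^2/2 = 2*α^2*c^2 := by ring
  have hpos := Real.exp_pos (-(2*α^2*c^2))
  calc Real.exp (2*α * (c - α * c^2)) + Real.exp (2*α * (-c - α * c^2))
      = (Real.exp (2*α*c) + Real.exp (-(2*α*c))) * Real.exp (-(2*α^2*c^2)) := by
        rw [e1, e2]; ring
    _ ≤ (2 * Real.exp ((2*α*c)^2/2)) * Real.exp (-(2*α^2*c^2)) :=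
        mul_le_mul_of_nonneg_right h2 hpos.le
    _ = 2 := by rw [e3, mul_assoc, ← Real.exp_add]; simp

lemma mgf_bound : ∀ (n : ℕ) (α : ℝ) (y : Fin n → (Fin n → Bool) → ℝ), Predictable y →
    ∑ e : Fin n → Bool,
      Real.exp (2*α * ∑ t, (sgn (e t) * y t e - α * (y t e)^2)) ≤ 2 ^ n := by
  intro n
  induction n with
  | zero => intro α y _; simp
  | succ n ih =>
    intro α y hpred
    -- reindex by (b, e') ↦ (Fin.cons b e' : Fin (n+1) → Bool)
    have hre : ∑ e : Fin (n+1) → Bool,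
        Real.exp (2*α * ∑ t, (sgn (e t) * y t e - α * (y t e)^2))
      = ∑ b : Bool, ∑ e' : Fin n → Bool,
        Real.exp (2*α * ∑ t, (sgn ((Fin.cons b e' : Fin (n+1) → Bool) t) * y t ((Fin.cons b e' : Fin (n+1) → Bool))
          - α * (y t ((Fin.cons b e' : Fin (n+1) → Bool)))^2)) := by
      rw [← Fintype.sum_prod_type']
      exact (Fintype.sum_equiv (Fin.consEquiv fun _ => Bool) _ _ (fun p => rfl)).symm
    rw [hre]
    -- the value at time 0 is a constant c
    set c : ℝ := y 0 (Fin.cons true (fun _ => false)) with hc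
    have hy0 : ∀ e, y 0 e = c := fun e =>
      hpred 0 e (Fin.cons true (fun _ => false)) (fun s hs => absurd hs (by simp [Fin.not_lt_zero]))
    have key : ∀ b : Bool, ∑ e' : Fin n → Bool,
        Real.exp (2*α * ∑ t, (sgn ((Fin.cons b e' : Fin (n+1) → Bool) t) * y t ((Fin.cons b e' : Fin (n+1) → Bool))
          - α * (y t ((Fin.cons b e' : Fin (n+1) → Bool)))^2))
        = Real.exp (2*α * (sgn b * c - α * c^2)) *
          ∑ e' : Fin n → Bool,
            Real.exp (2*α * ∑ t : Fin n, (sgn (e' t) * y t.succ ((Fin.cons b e' : Fin (n+1) → Bool))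
              - α * (y t.succ ((Fin.cons b e' : Fin (n+1) → Bool)))^2)) := by
      intro b
      rw [mul_sum]
      refine Finset.sum_congr rfl fun e' _ => ?_
      rw [← Real.exp_add, Fin.sum_univ_succ]
      congr 1
      simp only [Fin.cons_zero, Fin.cons_succ, hy0]
      ring
    have hpred' : ∀ b : Bool,
        Predictable (fun (t : Fin n) (e' : Fin n → Bool) => y t.succ ((Fin.cons b e' : Fin (n+1) → Bool))) := by
      intro b t e' e'' h
      refine hpred t.succ _ _ ?_
      intro s hs
      induction s using Fin.cases with
      | zero => simp
      | succ s => simp only [Fin.cons_succ]; exact h s (by exact_mod_cast Fin.succ_lt_succ_iff.mp hs)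
    calc ∑ b : Bool, ∑ e' : Fin n → Bool,
        Real.exp (2*α * ∑ t, (sgn ((Fin.cons b e' : Fin (n+1) → Bool) t) * y t ((Fin.cons b e' : Fin (n+1) → Bool))
          - α * (y t ((Fin.cons b e' : Fin (n+1) → Bool)))^2))
        ≤ ∑ b : Bool, Real.exp (2*α * (sgn b * c - α * c^2)) * 2 ^ n := by
          refine Finset.sum_le_sum fun b _ => ?_
          rw [key b]
          exact mul_le_mul_of_nonneg_left (ih α _ (hpred' b)) (Real.exp_pos _).le
      _ ≤ 2 ^ (n+1) := by
          have h' := two_point α c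
          rw [Fintype.sum_bool]
          have hs1 : sgn true = 1 := rfl
          have hs2 : sgn false = -1 := rfl
          rw [hs1, hs2]
          have e1 : 2*α*((1:ℝ)*c - α*c^2) = 2*α*(c - α*c^2) := by ring
          have e2 : 2*α*((-1:ℝ)*c - α*c^2) = 2*α*(-c - α*c^2) := by ring
          rw [e1, e2, show (2:ℝ)^(n+1) = 2^n * 2 from pow_succ 2 n]
          nlinarith [mul_le_mul_of_nonneg_right h' (le_of_lt (pow_pos (by norm_num : (0:ℝ) < 2) n))]

/-- Tail bound for a predictable process with quadratic offset, under the uniform measure on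
sign sequences: if `|yhat_t| ≤ 1` is predictable w.r.t. the dyadic filtration and `α > 0`, then
`P(∑_t (ε_t yhat_t - α yhat_t²) > u) ≤ exp(-2αu)` for every `u > 0`. -/
theorem stmt8 (n : ℕ) (yhat : Fin n → (Fin n → Bool) → ℝ)
    (hpred : Predictable yhat) (hbdd : ∀ t e, |yhat t e| ≤ 1)
    (α : ℝ) (hα : 0 < α) (u : ℝ) (hu : 0 < u) :
    ((Finset.univ.filter fun e : Fin n → Bool =>
        ∑ t, (sgn (e t) * yhat t e - α * (yhat t e) ^ 2) > u).card : ℝ) / 2 ^ n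
      ≤ Real.exp (-(2 * α * u)) := by
  set S := fun e : Fin n → Bool => ∑ t, (sgn (e t) * yhat t e - α * (yhat t e) ^ 2) with hS
  set F := Finset.univ.filter fun e : Fin n → Bool => S e > u with hF
  have h1 : (F.card : ℝ) * Real.exp (2*α*u) ≤ ∑ e : Fin n → Bool, Real.exp (2*α * S e) := by
    calc (F.card : ℝ) * Real.exp (2*α*u) = ∑ _e ∈ F, Real.exp (2*α*u) := by
          rw [Finset.sum_const, nsmul_eq_mul]
      _ ≤ ∑ e ∈ F, Real.exp (2*α * S e) := by
          refine Finset.sum_le_sum fun e he => ?_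
          have : u < S e := (Finset.mem_filter.mp he).2
          exact Real.exp_le_exp.mpr (by nlinarith)
      _ ≤ ∑ e : Fin n → Bool, Real.exp (2*α * S e) :=
          Finset.sum_le_sum_of_subset_of_nonneg (Finset.filter_subset _ _)
            (fun e _ _ => (Real.exp_pos _).le)
  have h2 := mgf_bound n α yhat hpred
  have h3 : (F.card : ℝ) * Real.exp (2*α*u) ≤ 2 ^ n := le_trans h1 h2
  have hexp : (0:ℝ) < Real.exp (2*α*u) := Real.exp_pos _
  have h2n : (0:ℝ) < 2 ^ n := pow_pos (by norm_num) n
  rw [div_le_iff₀ h2n]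
  rw [← le_div_iff₀ hexp] at h3
  calc (F.card : ℝ) ≤ 2 ^ n / Real.exp (2*α*u) := h3
    _ = Real.exp (-(2*α*u)) * 2 ^ n := by
        rw [Real.exp_neg, div_eq_mul_inv, mul_comm]
end

section
/- Let (ε_t) be i.i.d. Rademacher variables, F a class of real-valued functions on X, and x = (x_1,...,x_n) an X-valued predictable process with respect to the dyadic filtration. Suppose for every {0,1}-valued predictable process b and constant D > 0, E[sup_{f∈F} ∑_{t=1}^n ε_t b_t f(x_t)] ≤ D (max_ε ∑_t b_t)^{1/r} · sup_{f,t,ε} |b_t f(x_t)| holds (growth condition with exponent 1/r, r ∈ (1,2]). Then for every 1 ≤ p < r, E_ε[sup_{f∈F} ∑_{t=1}^n ε_t f(x_t)] ≤ (2D / (1 - 2^{-(r-p)/(rp)})) · max_ε (∑_{t=1}^n sup_{f∈F} |f(x_t(ε))|^p)^{1/p}. -/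
open Finset

noncomputable def lvl (A gv p : ℝ) (k : ℕ) : ℝ :=
  open Classical in
  if A * 2 ^ (-((k:ℝ)+1)/p) < gv ∧ gv ≤ A * 2 ^ (-(k:ℝ)/p) then 1 else 0

lemma lvl_nonneg (A gv p : ℝ) (k : ℕ) : 0 ≤ lvl A gv p k := by
  unfold lvl; split <;> norm_num

lemma lvl_zero_or_one (A gv p : ℝ) (k : ℕ) : lvl A gv p k = 0 ∨ lvl A gv p k = 1 := by
  unfold lvl; split <;> simp

lemma lvl_le_one (A gv p : ℝ) (k : ℕ) : lvl A gv p k ≤ 1 := by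
  rcases lvl_zero_or_one A gv p k with h | h <;> rw [h] <;> norm_num

lemma lvl_eq_one {A gv p : ℝ} {k : ℕ} (h : lvl A gv p k = 1) :
    A * 2 ^ (-((k:ℝ)+1)/p) < gv ∧ gv ≤ A * 2 ^ (-(k:ℝ)/p) := by
  unfold lvl at h; split at h
  · assumption
  · norm_num at h

lemma exp_mono {p : ℝ} (hp : 0 < p) {a b : ℝ} (hab : a ≤ b) :
    (2:ℝ) ^ (-b/p) ≤ (2:ℝ) ^ (-a/p) := by
  apply Real.rpow_le_rpow_left_iff one_lt_two |>.mpr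
  gcongr ?_ / p; linarith

lemma lvl_sum {A gv p : ℝ} (hA : 0 < A) (hp : 0 < p) (hg : 0 < gv) (hgA : gv ≤ A)
    {N : ℕ} (hN : A * 2 ^ (-(N:ℝ)/p) < gv) :
    ∑ k ∈ range N, lvl A gv p k = 1 := by
  have hex : ∃ k : ℕ, A * 2 ^ (-((k:ℝ)+1)/p) < gv :=
    ⟨N, lt_of_le_of_lt (mul_le_mul_of_nonneg_left (exp_mono hp (by push_cast; linarith)) hA.le) hN⟩
  obtain ⟨kk, hlow, hmin⟩ : ∃ k : ℕ, (A * 2 ^ (-((k:ℝ)+1)/p) < gv) ∧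
      ∀ m, m < k → ¬(A * 2 ^ (-((m:ℝ)+1)/p) < gv) :=
    ⟨Nat.find hex, Nat.find_spec hex, fun m hm => Nat.find_min hex hm⟩
  have hup : gv ≤ A * 2 ^ (-(kk:ℝ)/p) := by
    rcases Nat.eq_zero_or_pos kk with h0 | h0
    · rw [h0]; simpa using hgA
    · obtain ⟨j, rfl⟩ : ∃ j, kk = j + 1 := ⟨kk - 1, (Nat.succ_pred_eq_of_pos h0).symm⟩
      have := hmin j (by omega)
      push_cast
      linarith [not_lt.mp this]
  have hone : lvl A gv p kk = 1 := by
    unfold lvl; rw [if_pos ⟨hlow, hup⟩]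
  have hkN : kk < N := by
    by_contra hcon
    have : A * 2 ^ (-(kk:ℝ)/p) ≤ A * 2 ^ (-(N:ℝ)/p) :=
      mul_le_mul_of_nonneg_left (exp_mono hp (by exact_mod_cast not_lt.mp hcon)) hA.le
    linarith
  have hzero : ∀ k : ℕ, k ≠ kk → lvl A gv p k = 0 := by
    intro k hk
    rcases lvl_zero_or_one A gv p k with h | h
    · exact h
    exfalso
    obtain ⟨hl, hu⟩ := lvl_eq_one h
    rcases lt_or_gt_of_ne hk with hlt | hlt
    · have h1 : A * 2 ^ (-(kk:ℝ)/p) ≤ A * 2 ^ (-((k:ℝ)+1)/p) :=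
        mul_le_mul_of_nonneg_left
          (exp_mono hp (show ((k:ℝ)+1) ≤ (kk:ℝ) by exact_mod_cast hlt)) hA.le
      linarith
    · have h1 : A * 2 ^ (-(k:ℝ)/p) ≤ A * 2 ^ (-((kk:ℝ)+1)/p) :=
        mul_le_mul_of_nonneg_left
          (exp_mono hp (show ((kk:ℝ)+1) ≤ (k:ℝ) by exact_mod_cast hlt)) hA.le
      linarith
  calc ∑ k ∈ range N, lvl A gv p k = ∑ k ∈ range N, if k = kk then 1 else 0 := by
        refine Finset.sum_congr rfl fun k _ => ?_
        by_cases h : k = kk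
        · rw [if_pos h, h, hone]
        · rw [if_neg h, hzero k h]
    _ = 1 := by rw [Finset.sum_ite_eq' (range N) kk fun _ => (1:ℝ), if_pos (mem_range.mpr hkN)]

lemma geom_partial {x : ℝ} (h0 : 0 ≤ x) (h1 : x < 1) (N : ℕ) :
    ∑ k ∈ range N, x ^ k ≤ (1 - x)⁻¹ := by
  have hs : Summable fun k : ℕ => x ^ k := summable_geometric_of_lt_one h0 h1
  calc ∑ k ∈ range N, x ^ k ≤ ∑' k : ℕ, x ^ k :=
        Summable.sum_le_tsum (range N) (fun k _ => pow_nonneg h0 k) hs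
    _ = (1 - x)⁻¹ := tsum_geometric_of_lt_one h0 h1

noncomputable def gfun {X ι : Type*} (f : ι → X → ℝ) (p : ℝ) (y : X) : ℝ :=
  (⨆ i, |f i y| ^ p) ^ ((1:ℝ)/p)

/-- From the `n^{1/r}` growth condition (stated for all `{0,1}`-valued predictable truncations
`b`) to a variation bound: for `1 ≤ p < r ≤ 2`,
`E_ε[sup_f ∑_t ε_t f(x_t)] ≤ (2D/(1 - 2^{-(r-p)/(rp)})) max_ε (∑_t sup_f |f(x_t(ε))|^p)^{1/p}`. -/
theorem stmt11 {X : Type*} {ι : Type*} [Nonempty ι] (f : ι → X → ℝ)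
    (n : ℕ) (x : Fin n → (Fin n → Bool) → X) (hx : Predictable x)
    (r : ℝ) (hr1 : 1 < r) (hr2 : r ≤ 2) (D : ℝ) (hD : 0 < D)
    (hgrowth : ∀ b : Fin n → (Fin n → Bool) → ℝ, Predictable b →
      (∀ t e, b t e = 0 ∨ b t e = 1) →
      ((2 : ℝ) ^ n)⁻¹ * ∑ e : Fin n → Bool, ⨆ i, ∑ t, sgn (e t) * b t e * f i (x t e)
        ≤ D * (⨆ e : Fin n → Bool, ∑ t, b t e) ^ ((1:ℝ)/r)
            * ⨆ i, ⨆ t, ⨆ e, |b t e * f i (x t e)|)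
    (p : ℝ) (hp1 : 1 ≤ p) (hpr : p < r) :
    ((2 : ℝ) ^ n)⁻¹ * ∑ e : Fin n → Bool, ⨆ i, ∑ t, sgn (e t) * f i (x t e)
      ≤ (2 * D / (1 - 2 ^ (-((r - p) / (r * p)))))
          * ⨆ e : Fin n → Bool, (∑ t, ⨆ i, |f i (x t e)| ^ p) ^ ((1:ℝ)/p) := by
  classical
  have hp0 : (0:ℝ) < p := lt_of_lt_of_le one_pos hp1
  have hr0 : (0:ℝ) < r := lt_trans one_pos hr1
  set q : ℝ := (r - p) / (r * p) with hqdef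
  have hq0 : 0 < q := div_pos (by linarith) (by positivity)
  have h2q : (2:ℝ) ^ (-q) < 1 :=
    Real.rpow_lt_one_of_one_lt_of_neg one_lt_two (by linarith)
  have h2q0 : (0:ℝ) ≤ 2 ^ (-q) := Real.rpow_nonneg (by norm_num) _
  have hcpos : 0 < 1 - (2:ℝ) ^ (-q) := by linarith
  set A := ⨆ e : Fin n → Bool, (∑ t, ⨆ i, |f i (x t e)| ^ p) ^ ((1:ℝ)/p) with hAdef
  have hGp0 : ∀ (t : Fin n) (e : Fin n → Bool), 0 ≤ ⨆ i, |f i (x t e)| ^ p :=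
    fun t e => Real.iSup_nonneg fun i => Real.rpow_nonneg (abs_nonneg _) _
  have hA0 : 0 ≤ A :=
    Real.iSup_nonneg fun e =>
      Real.rpow_nonneg (Finset.sum_nonneg fun t _ => hGp0 t e) _
  have hRHS0 : 0 ≤ 2 * D / (1 - 2 ^ (-q)) * A :=
    mul_nonneg (div_nonneg (by linarith) hcpos.le) hA0
  by_cases hM : ∃ M, ∀ (i : ι) (t : Fin n) (e : Fin n → Bool), |f i (x t e)| ≤ M
  case neg =>
    have h1 := hgrowth (fun _ _ => 1) (fun t e e' _ => rfl) (fun t e => Or.inr rfl)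
    simp only [mul_one, one_mul] at h1
    have h0 : (⨆ i, ⨆ t : Fin n, ⨆ e : Fin n → Bool, |f i (x t e)|) = 0 := by
      apply Real.iSup_of_not_bddAbove
      rintro ⟨M, hMem⟩
      apply hM
      refine ⟨M, fun i t e => ?_⟩
      calc |f i (x t e)| ≤ ⨆ e, |f i (x t e)| :=
            le_ciSup (f := fun e => |f i (x t e)|)
              (Set.Finite.bddAbove (Set.finite_range _)) e
        _ ≤ ⨆ t, ⨆ e, |f i (x t e)| :=
            le_ciSup (f := fun t => ⨆ e, |f i (x t e)|)
              (Set.Finite.bddAbove (Set.finite_range _)) t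
        _ ≤ M := hMem ⟨i, rfl⟩
    rw [h0, mul_zero] at h1
    exact h1.trans hRHS0
  case pos =>
  obtain ⟨M, hM⟩ := hM
  have hbdd : ∀ (t : Fin n) (e : Fin n → Bool),
      BddAbove (Set.range fun i => |f i (x t e)| ^ p) := by
    intro t e
    refine ⟨M ^ p, ?_⟩
    rintro y ⟨i, rfl⟩
    exact Real.rpow_le_rpow (abs_nonneg _) (hM i t e) hp0.le
  have hfGp : ∀ (i : ι) (t : Fin n) (e : Fin n → Bool),
      |f i (x t e)| ^ p ≤ ⨆ i', |f i' (x t e)| ^ p :=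
    fun i t e => le_ciSup (hbdd t e) i
  have hfg : ∀ (i : ι) (t : Fin n) (e : Fin n → Bool),
      |f i (x t e)| ≤ gfun f p (x t e) := by
    intro i t e
    have h1 : (|f i (x t e)| ^ p) ^ ((1:ℝ)/p) = |f i (x t e)| := by
      rw [one_div, Real.rpow_rpow_inv (abs_nonneg _) hp0.ne']
    rw [gfun, ← h1]
    exact Real.rpow_le_rpow (by positivity) (hfGp i t e) (by positivity)
  have hgnonneg : ∀ (t : Fin n) (e : Fin n → Bool), 0 ≤ gfun f p (x t e) :=
    fun t e => Real.rpow_nonneg (hGp0 t e) _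
  have hgA : ∀ (t : Fin n) (e : Fin n → Bool), gfun f p (x t e) ≤ A := by
    intro t e
    calc gfun f p (x t e)
        ≤ (∑ t', ⨆ i, |f i (x t' e)| ^ p) ^ ((1:ℝ)/p) := by
          rw [gfun]
          exact Real.rpow_le_rpow (hGp0 t e)
            (Finset.single_le_sum (fun t' _ => hGp0 t' e) (mem_univ t)) (by positivity)
      _ ≤ A := by
          rw [hAdef]
          exact le_ciSup (f := fun e => (∑ t', ⨆ i, |f i (x t' e)| ^ p) ^ ((1:ℝ)/p))
            (Set.Finite.bddAbove (Set.finite_range _)) e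
  have hGp_eq : ∀ (t : Fin n) (e : Fin n → Bool),
      (gfun f p (x t e)) ^ p = ⨆ i, |f i (x t e)| ^ p := by
    intro t e
    rw [gfun, one_div, Real.rpow_inv_rpow (hGp0 t e) hp0.ne']
  rcases eq_or_lt_of_le hA0 with hA | hApos
  · -- A = 0 : everything vanishes
    have hf0 : ∀ (i : ι) (t : Fin n) (e : Fin n → Bool), f i (x t e) = 0 := by
      intro i t e
      have h1 : |f i (x t e)| ≤ 0 := (hfg i t e).trans ((hgA t e).trans hA.ge)
      exact abs_nonpos_iff.mp h1
    have hz : ∀ e : Fin n → Bool, (⨆ i, ∑ t, sgn (e t) * f i (x t e)) = 0 := by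
      intro e
      have h1 : ∀ i : ι, ∑ t, sgn (e t) * f i (x t e) = 0 :=
        fun i => Finset.sum_eq_zero fun t _ => by rw [hf0, mul_zero]
      simp only [h1, ciSup_const]
    rw [Finset.sum_eq_zero fun e _ => hz e, mul_zero]
    exact hRHS0
  · -- A > 0 : the peeling argument
    -- choose N so that all occupied levels lie below N
    have hSne : ∃ te : Fin n × (Fin n → Bool), 0 < gfun f p (x te.1 te.2) := by
      by_contra hcon
      push_neg at hcon
      have hAle : A ≤ 0 := by
        rw [hAdef]
        apply Real.iSup_le _ le_rfl
        intro e
        have hGz : ∀ t, (⨆ i, |f i (x t e)| ^ p) = 0 := by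
          intro t
          have hg0 : gfun f p (x t e) = 0 := le_antisymm (hcon (t, e)) (hgnonneg t e)
          rw [← hGp_eq t e, hg0, Real.zero_rpow hp0.ne']
        rw [Finset.sum_eq_zero fun t _ => hGz t,
          Real.zero_rpow (by positivity : (1:ℝ)/p ≠ 0)]
      linarith
    obtain ⟨te₀, hte₀⟩ := hSne
    set S : Finset (Fin n × (Fin n → Bool)) :=
      univ.filter (fun te => 0 < gfun f p (x te.1 te.2)) with hS
    have hSne' : S.Nonempty := ⟨te₀, mem_filter.mpr ⟨mem_univ _, hte₀⟩⟩
    have hm0pos : 0 < S.inf' hSne' (fun te => gfun f p (x te.1 te.2)) :=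
      (Finset.lt_inf'_iff hSne').mpr fun te hte => (mem_filter.mp hte).2
    set m0 := S.inf' hSne' (fun te => gfun f p (x te.1 te.2)) with hm0
    obtain ⟨N, hNlt⟩ : ∃ N : ℕ, A * 2 ^ (-(N:ℝ)/p) < m0 := by
      have hneg : -(1:ℝ)/p < 0 := div_neg_of_neg_of_pos (by norm_num) hp0
      obtain ⟨N, hN⟩ := exists_pow_lt_of_lt_one (div_pos hm0pos hApos)
        (Real.rpow_lt_one_of_one_lt_of_neg one_lt_two hneg)
      refine ⟨N, ?_⟩
      have heq : ((2:ℝ) ^ (-(1:ℝ)/p)) ^ N = 2 ^ (-(N:ℝ)/p) := by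
        rw [← Real.rpow_natCast ((2:ℝ) ^ (-(1:ℝ)/p)) N,
          ← Real.rpow_mul (by norm_num : (0:ℝ) ≤ 2)]
        ring_nf
      rw [heq] at hN
      calc A * 2 ^ (-(N:ℝ)/p) < A * (m0 / A) := mul_lt_mul_of_pos_left hN hApos
        _ = m0 := by field_simp
    have hsum1 : ∀ (t : Fin n) (e : Fin n → Bool), 0 < gfun f p (x t e) →
        ∑ k ∈ range N, lvl A (gfun f p (x t e)) p k = 1 := by
      intro t e hg
      apply lvl_sum hApos hp0 hg (hgA t e)
      calc A * 2 ^ (-(N:ℝ)/p) < m0 := hNlt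
        _ ≤ gfun f p (x t e) :=
            Finset.inf'_le (f := fun te : Fin n × (Fin n → Bool) => gfun f p (x te.1 te.2))
              (mem_filter.mpr ⟨mem_univ (t, e), hg⟩)
    have hdecomp : ∀ (i : ι) (e : Fin n → Bool),
        ∑ t, sgn (e t) * f i (x t e)
          = ∑ k ∈ range N, ∑ t, sgn (e t) * lvl A (gfun f p (x t e)) p k * f i (x t e) := by
      intro i e
      rw [Finset.sum_comm]
      refine Finset.sum_congr rfl fun t _ => ?_
      rcases le_or_gt (gfun f p (x t e)) 0 with h | h
      · have hf0 : f i (x t e) = 0 :=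
          abs_nonpos_iff.mp ((hfg i t e).trans h)
        simp [hf0]
      · have hcongr : ∀ k ∈ range N,
            sgn (e t) * lvl A (gfun f p (x t e)) p k * f i (x t e)
              = lvl A (gfun f p (x t e)) p k * (sgn (e t) * f i (x t e)) := fun k _ => by ring
        rw [Finset.sum_congr rfl hcongr, ← Finset.sum_mul, hsum1 t e h, one_mul]
    -- per-level estimate
    have hperk : ∀ k ∈ range N,
        ((2:ℝ) ^ n)⁻¹ * ∑ e : Fin n → Bool,
            ⨆ i, ∑ t, sgn (e t) * lvl A (gfun f p (x t e)) p k * f i (x t e)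
          ≤ (2 * D * A) * ((2:ℝ) ^ (-q)) ^ k := by
      intro k _
      have hbpred : Predictable (fun t e => lvl A (gfun f p (x t e)) p k) := by
        intro t e e' h
        show lvl A (gfun f p (x t e)) p k = lvl A (gfun f p (x t e')) p k
        rw [hx t e e' h]
      have hgrow := hgrowth (fun t e => lvl A (gfun f p (x t e)) p k) hbpred
        (fun t e => lvl_zero_or_one _ _ _ _)
      beta_reduce at hgrow
      refine le_trans hgrow ?_
      -- factor 2 : sup of |lvl * f|
      have hfac2 : (⨆ i, ⨆ t, ⨆ e, |lvl A (gfun f p (x t e)) p k * f i (x t e)|)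
          ≤ A * 2 ^ (-(k:ℝ)/p) := by
        have hpos : (0:ℝ) ≤ A * 2 ^ (-(k:ℝ)/p) := by positivity
        refine Real.iSup_le (fun i => Real.iSup_le (fun t => Real.iSup_le (fun e => ?_) hpos) hpos) hpos
        rcases lvl_zero_or_one A (gfun f p (x t e)) p k with h | h
        · rw [h, zero_mul, abs_zero]; exact hpos
        · rw [h, one_mul]
          exact (hfg i t e).trans (lvl_eq_one h).2
      -- factor 1 : counting
      have hfac1 : (⨆ e : Fin n → Bool, ∑ t, lvl A (gfun f p (x t e)) p k)
          ≤ 2 ^ ((k:ℝ)+1) := by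
        refine Real.iSup_le (fun e => ?_) (Real.rpow_nonneg (by norm_num) _)
        have hsumA : ∑ t, (⨆ i, |f i (x t e)| ^ p) ≤ A ^ p := by
          have h1 : (∑ t, ⨆ i, |f i (x t e)| ^ p) ^ ((1:ℝ)/p) ≤ A := by
            rw [hAdef]
            exact le_ciSup (f := fun e => (∑ t, ⨆ i, |f i (x t e)| ^ p) ^ ((1:ℝ)/p))
              (Set.Finite.bddAbove (Set.finite_range _)) e
          have h2 : ∑ t, (⨆ i, |f i (x t e)| ^ p)
              = ((∑ t, ⨆ i, |f i (x t e)| ^ p) ^ ((1:ℝ)/p)) ^ p := by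
            rw [one_div, Real.rpow_inv_rpow (Finset.sum_nonneg fun t _ => hGp0 t e) hp0.ne']
          rw [h2]
          exact Real.rpow_le_rpow
            (Real.rpow_nonneg (Finset.sum_nonneg fun t _ => hGp0 t e) _) h1 hp0.le
        have hkc : 0 < A ^ p * (2:ℝ) ^ (-((k:ℝ)+1)) :=
          mul_pos (Real.rpow_pos_of_pos hApos p) (Real.rpow_pos_of_pos two_pos _)
        have hterm : ∀ t : Fin n,
            (A ^ p * (2:ℝ) ^ (-((k:ℝ)+1))) * lvl A (gfun f p (x t e)) p k
              ≤ ⨆ i, |f i (x t e)| ^ p := by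
          intro t
          rcases lvl_zero_or_one A (gfun f p (x t e)) p k with h | h
          · rw [h, mul_zero]; exact hGp0 t e
          · rw [h, mul_one]
            have hlow := (lvl_eq_one h).1
            have h3 : (A * 2 ^ (-((k:ℝ)+1)/p)) ^ p = A ^ p * (2:ℝ) ^ (-((k:ℝ)+1)) := by
              rw [Real.mul_rpow hApos.le (Real.rpow_nonneg (by norm_num) _),
                ← Real.rpow_mul (by norm_num : (0:ℝ) ≤ 2), div_mul_cancel₀ _ hp0.ne']
            rw [← h3, ← hGp_eq t e]
            exact Real.rpow_le_rpow (by positivity) hlow.le hp0.le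
        have hsum : (A ^ p * (2:ℝ) ^ (-((k:ℝ)+1))) * ∑ t, lvl A (gfun f p (x t e)) p k
            ≤ A ^ p := by
          rw [Finset.mul_sum]
          exact le_trans (Finset.sum_le_sum fun t _ => hterm t) hsumA
        have hdiv : A ^ p / (A ^ p * (2:ℝ) ^ (-((k:ℝ)+1))) = 2 ^ ((k:ℝ)+1) := by
          rw [eq_comm, eq_div_iff hkc.ne', mul_left_comm,
            ← Real.rpow_add two_pos, add_neg_cancel, Real.rpow_zero, mul_one]
        rw [← hdiv, le_div_iff₀ hkc, mul_comm]
        exact hsum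
      -- combine
      have hstep : D * (⨆ e : Fin n → Bool, ∑ t, lvl A (gfun f p (x t e)) p k) ^ ((1:ℝ)/r)
            * (⨆ i, ⨆ t, ⨆ e, |lvl A (gfun f p (x t e)) p k * f i (x t e)|)
          ≤ D * ((2:ℝ) ^ ((k:ℝ)+1)) ^ ((1:ℝ)/r) * (A * 2 ^ (-(k:ℝ)/p)) := by
        have hsup1nn : 0 ≤ ⨆ e : Fin n → Bool, ∑ t, lvl A (gfun f p (x t e)) p k :=
          Real.iSup_nonneg fun e => Finset.sum_nonneg fun t _ => lvl_nonneg _ _ _ _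
        have habs : 0 ≤ ⨆ i, ⨆ t, ⨆ e, |lvl A (gfun f p (x t e)) p k * f i (x t e)| :=
          Real.iSup_nonneg fun i => Real.iSup_nonneg fun t =>
            Real.iSup_nonneg fun e => abs_nonneg _
        apply mul_le_mul _ hfac2 habs (by positivity)
        exact mul_le_mul_of_nonneg_left
          (Real.rpow_le_rpow hsup1nn hfac1 (by positivity)) hD.le
      refine hstep.trans ?_
      -- pure arithmetic with rpow
      have key : (2:ℝ) ^ (((k:ℝ)+1) * ((1:ℝ)/r)) * 2 ^ (-(k:ℝ)/p)
          ≤ 2 * ((2:ℝ) ^ (-q)) ^ k := by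
        rw [← Real.rpow_add two_pos]
        have h1 : 2 * ((2:ℝ) ^ (-q)) ^ k = 2 ^ ((1:ℝ) + (-q) * k) := by
          rw [Real.rpow_add two_pos, Real.rpow_one,
            ← Real.rpow_natCast ((2:ℝ) ^ (-q)) k, ← Real.rpow_mul (by norm_num : (0:ℝ) ≤ 2)]
        rw [h1]
        apply Real.rpow_le_rpow_left_iff one_lt_two |>.mpr
        have hq' : ((k:ℝ)+1) * ((1:ℝ)/r) + (-(k:ℝ)/p) = 1/r + (-q) * k := by
          rw [hqdef]; field_simp; ring
        rw [hq']
        have h1r : (1:ℝ)/r ≤ 1 := by rw [div_le_one hr0]; exact hr1.le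
        linarith
      have hexp : ((2:ℝ) ^ ((k:ℝ)+1)) ^ ((1:ℝ)/r) = 2 ^ (((k:ℝ)+1) * ((1:ℝ)/r)) := by
        rw [← Real.rpow_mul (by norm_num : (0:ℝ) ≤ 2)]
      calc D * ((2:ℝ) ^ ((k:ℝ)+1)) ^ ((1:ℝ)/r) * (A * 2 ^ (-(k:ℝ)/p))
          = (D * A) * ((2:ℝ) ^ (((k:ℝ)+1) * ((1:ℝ)/r)) * 2 ^ (-(k:ℝ)/p)) := by
            rw [hexp]; ring
        _ ≤ (D * A) * (2 * ((2:ℝ) ^ (-q)) ^ k) := by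
            apply mul_le_mul_of_nonneg_left key (by positivity)
        _ = (2 * D * A) * ((2:ℝ) ^ (-q)) ^ k := by ring
    -- assemble everything
    have hBdd : ∀ (k : ℕ) (e : Fin n → Bool),
        BddAbove (Set.range fun i =>
          ∑ t, sgn (e t) * lvl A (gfun f p (x t e)) p k * f i (x t e)) := by
      intro k e
      refine ⟨∑ t : Fin n, |M|, ?_⟩
      rintro y ⟨i, rfl⟩
      apply Finset.sum_le_sum
      intro t _
      have h1 : |sgn (e t) * lvl A (gfun f p (x t e)) p k * f i (x t e)|
          ≤ |f i (x t e)| := by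
        rw [abs_mul, abs_mul]
        have hs : |sgn (e t)| = 1 := by unfold sgn; split <;> norm_num
        rw [hs, one_mul]
        calc |lvl A (gfun f p (x t e)) p k| * |f i (x t e)|
            ≤ 1 * |f i (x t e)| := by
              apply mul_le_mul_of_nonneg_right _ (abs_nonneg _)
              rw [abs_of_nonneg (lvl_nonneg _ _ _ _)]
              exact lvl_le_one _ _ _ _
          _ = |f i (x t e)| := one_mul _
      calc sgn (e t) * lvl A (gfun f p (x t e)) p k * f i (x t e)
          ≤ |sgn (e t) * lvl A (gfun f p (x t e)) p k * f i (x t e)| := le_abs_self _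
        _ ≤ |f i (x t e)| := h1
        _ ≤ |M| := (hM i t e).trans (le_abs_self M)
    calc ((2:ℝ) ^ n)⁻¹ * ∑ e : Fin n → Bool, ⨆ i, ∑ t, sgn (e t) * f i (x t e)
        = ((2:ℝ) ^ n)⁻¹ * ∑ e : Fin n → Bool,
            ⨆ i, ∑ k ∈ range N, ∑ t, sgn (e t) * lvl A (gfun f p (x t e)) p k * f i (x t e) := by
          simp only [hdecomp]
      _ ≤ ((2:ℝ) ^ n)⁻¹ * ∑ e : Fin n → Bool,
            ∑ k ∈ range N, ⨆ i, ∑ t, sgn (e t) * lvl A (gfun f p (x t e)) p k * f i (x t e) := by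
          apply mul_le_mul_of_nonneg_left _ (by positivity)
          apply Finset.sum_le_sum
          intro e _
          exact ciSup_le fun i => Finset.sum_le_sum fun k _ => le_ciSup (hBdd k e) i
      _ = ∑ k ∈ range N, ((2:ℝ) ^ n)⁻¹ * ∑ e : Fin n → Bool,
            ⨆ i, ∑ t, sgn (e t) * lvl A (gfun f p (x t e)) p k * f i (x t e) := by
          rw [Finset.sum_comm, Finset.mul_sum]
      _ ≤ ∑ k ∈ range N, (2 * D * A) * ((2:ℝ) ^ (-q)) ^ k := Finset.sum_le_sum hperk
      _ = (2 * D * A) * ∑ k ∈ range N, ((2:ℝ) ^ (-q)) ^ k := by rw [Finset.mul_sum]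
      _ ≤ (2 * D * A) * (1 - 2 ^ (-q))⁻¹ :=
          mul_le_mul_of_nonneg_left (geom_partial h2q0 h2q N) (by positivity)
      _ = 2 * D / (1 - 2 ^ (-q)) * A := by
          rw [div_eq_mul_inv]; ring
end

section
/- Let Z(ε^1),...,Z(ε^N) be i.i.d. nonnegative random variables such that sup_{N≥1} P(N^{-1/p} max_{j≤N} Z(ε^j) > u_0) ≤ 1/2 for some u_0 > 0 and p ≥ 1. Then there exists a finite constant B (depending only on u_0 and p) such that P(Z(ε^1) > u) ≤ B u^{-p} for all u > 0. -/
open MeasureTheory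
open scoped ENNReal

lemma key14 (ρ : Measure ℝ) [IsProbabilityMeasure ρ]
    (p : ℝ) (hp : 1 ≤ p) (u₀ : ℝ) (hu₀ : 0 < u₀)
    (hmax : ∀ N : ℕ, 1 ≤ N →
      (Measure.pi fun _ : Fin N => ρ)
          {x | (N : ℝ) ^ (-(1/p)) * (⨆ j : Fin N, x j) > u₀} ≤ 1/2)
    (N : ℕ) (hN : 1 ≤ N) :
    ρ (Set.Ioi (u₀ * (N : ℝ) ^ ((1:ℝ)/p))) ≤ ENNReal.ofReal (1 / N) := by
  have hNpos : (0:ℝ) < N := by exact_mod_cast hN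
  have hp0 : p ≠ 0 := by positivity
  set t : ℝ := u₀ * (N : ℝ) ^ ((1:ℝ)/p) with ht
  set c : ℝ := (N : ℝ) ^ (-(1/p)) with hc
  have hcpos : 0 < c := Real.rpow_pos_of_pos hNpos _
  have hct : c * t = u₀ := by
    rw [ht, hc, mul_comm u₀, ← mul_assoc, ← Real.rpow_add hNpos]
    simp
  set μ := Measure.pi fun _ : Fin N => ρ with hμ
  have hne : Nonempty (Fin N) := Fin.pos_iff_nonempty.mp hN
  -- complement inclusion
  have hsub : {x : Fin N → ℝ | c * (⨆ j : Fin N, x j) > u₀}ᶜ ⊆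
      Set.pi Set.univ (fun _ : Fin N => Set.Iic t) := by
    intro x hx j _
    have hsup : (⨆ j : Fin N, x j) ≤ t := by
      have : ¬ (c * (⨆ j : Fin N, x j) > u₀) := hx
      have h1 : c * (⨆ j : Fin N, x j) ≤ c * t := by rw [hct]; linarith [not_lt.mp this]
      exact le_of_mul_le_mul_left h1 hcpos
    have hb : BddAbove (Set.range x) := (Set.finite_range x).bddAbove
    exact le_trans (le_ciSup hb j) hsup
  have hμc : μ {x : Fin N → ℝ | c * (⨆ j : Fin N, x j) > u₀}ᶜ + (1/2 : ℝ≥0∞) ≥ 1 := by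
    have h1 : μ Set.univ = 1 := measure_univ
    have h2 : μ Set.univ ≤ μ {x : Fin N → ℝ | c * (⨆ j : Fin N, x j) > u₀}ᶜ +
        μ {x : Fin N → ℝ | c * (⨆ j : Fin N, x j) > u₀} := by
      rw [← Set.compl_union_self {x : Fin N → ℝ | c * (⨆ j : Fin N, x j) > u₀}]
      exact measure_union_le _ _
    calc (1:ℝ≥0∞) = μ Set.univ := h1.symm
      _ ≤ _ := h2
      _ ≤ _ := by gcongr; exact hmax N hN
  have hpi : (ρ (Set.Iic t)) ^ N ≥ 1 - 1/2 := by
    have h1 : μ (Set.pi Set.univ (fun _ : Fin N => Set.Iic t)) = (ρ (Set.Iic t)) ^ N := by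
      rw [hμ, Measure.pi_pi]; simp
    have h2 : μ {x : Fin N → ℝ | c * (⨆ j : Fin N, x j) > u₀}ᶜ ≤ (ρ (Set.Iic t)) ^ N := by
      rw [← h1]; exact measure_mono hsub
    have := hμc
    have h3 : (1:ℝ≥0∞) - 1/2 ≤ μ {x : Fin N → ℝ | c * (⨆ j : Fin N, x j) > u₀}ᶜ :=
      tsub_le_iff_right.mpr this
    exact le_trans h3 h2
  -- real-valued tail bound
  set f : ℝ := (ρ (Set.Iic t)).toReal with hf
  have hfle1 : f ≤ 1 := by
    rw [hf]
    exact ENNReal.toReal_le_of_le_ofReal zero_le_one (by simpa using prob_le_one)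
  have hf0 : 0 ≤ f := ENNReal.toReal_nonneg
  have hfN : (1/2 : ℝ) ≤ f ^ N := by
    have : ((1:ℝ≥0∞) - 1/2).toReal ≤ ((ρ (Set.Iic t)) ^ N).toReal := by
      apply ENNReal.toReal_mono _ hpi
      exact ENNReal.pow_ne_top (measure_ne_top ρ _)
    rw [ENNReal.toReal_pow] at this
    simpa using this
  have hexp : f ≤ Real.exp (f - 1) := by
    have := Real.add_one_le_exp (f - 1); linarith
  have hfN2 : (1/2 : ℝ) ≤ Real.exp ((N : ℝ) * (f - 1)) := by
    calc (1/2 : ℝ) ≤ f ^ N := hfN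
      _ ≤ Real.exp (f - 1) ^ N := pow_le_pow_left₀ hf0 hexp N
      _ = Real.exp ((N : ℝ) * (f - 1)) := (Real.exp_nat_mul _ N).symm
  have hlog : Real.log (1/2) ≤ (N : ℝ) * (f - 1) := by
    have := Real.log_le_log (by norm_num) hfN2
    rwa [Real.log_exp] at this
  have hlog2 : Real.log 2 ≤ 1 := by
    have := Real.log_two_lt_d9; linarith
  have htail : 1 - f ≤ 1 / N := by
    rw [one_div, Real.log_inv] at hlog
    have h1 : 1 - f ≤ Real.log 2 / N := by
      rw [le_div_iff₀ hNpos]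
      nlinarith
    calc (1:ℝ) - f ≤ Real.log 2 / N := h1
      _ ≤ 1 / N := by gcongr
  -- conclude
  have hIoi : ρ (Set.Ioi t) = 1 - ρ (Set.Iic t) := by
    rw [← Set.compl_Iic, measure_compl measurableSet_Iic (measure_ne_top ρ _), measure_univ]
  rw [hIoi]
  have hfeq : ρ (Set.Iic t) = ENNReal.ofReal f := (ENNReal.ofReal_toReal (measure_ne_top ρ _)).symm
  rw [hfeq, ← ENNReal.ofReal_one, ← ENNReal.ofReal_sub _ hf0]
  exact ENNReal.ofReal_le_ofReal htail

/-- Reverse Hölder principle (Burkholder, Pisier): if a nonnegative random variable with law `ρ`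
satisfies `sup_N P(N^{-1/p} max_{j≤N} Z_j > u₀) ≤ 1/2` for i.i.d. copies `Z_1,...,Z_N`, then its
tail is polynomial: there is a finite `B` with `P(Z > u) ≤ B u^{-p}` for all `u > 0`. -/
theorem stmt14 (ρ : Measure ℝ) [IsProbabilityMeasure ρ]
    (hnonneg : ρ (Set.Iio 0) = 0)
    (p : ℝ) (hp : 1 ≤ p) (u₀ : ℝ) (hu₀ : 0 < u₀)
    (hmax : ∀ N : ℕ, 1 ≤ N →
      (Measure.pi fun _ : Fin N => ρ)
          {x | (N : ℝ) ^ (-(1/p)) * (⨆ j : Fin N, x j) > u₀} ≤ 1/2) :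
    ∃ B : ℝ, ∀ u : ℝ, 0 < u → ρ {z | z > u} ≤ ENNReal.ofReal (B * u ^ (-p)) := by
  have hp0 : (0:ℝ) < p := by linarith
  refine ⟨2 * u₀ ^ p, fun u hu => ?_⟩
  have hset : {z : ℝ | z > u} = Set.Ioi u := rfl
  have hBu : 2 * u₀ ^ p * u ^ (-p) = 2 * (u₀ / u) ^ p := by
    rw [Real.div_rpow hu₀.le hu.le, Real.rpow_neg hu.le, div_eq_mul_inv, mul_assoc]
  by_cases h : u₀ ≤ u
  · -- main case
    set r : ℝ := (u / u₀) ^ p with hr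
    have hr1 : (1:ℝ) ≤ r := Real.one_le_rpow ((one_le_div hu₀).mpr h) hp0.le
    set N : ℕ := ⌊r⌋₊ with hNdef
    have hN1 : 1 ≤ N := Nat.le_floor (by exact_mod_cast hr1)
    have hNr : (N:ℝ) ≤ r := Nat.floor_le (by linarith)
    have hrN : r < N + 1 := Nat.lt_floor_add_one r
    have hNpos : (0:ℝ) < N := by exact_mod_cast hN1
    -- t_N ≤ u
    have htu : u₀ * (N:ℝ) ^ ((1:ℝ)/p) ≤ u := by
      have h1 : (N:ℝ) ^ ((1:ℝ)/p) ≤ r ^ ((1:ℝ)/p) :=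
        Real.rpow_le_rpow hNpos.le hNr (by positivity)
      have h2 : r ^ ((1:ℝ)/p) = u / u₀ := by
        rw [hr, ← Real.rpow_mul (by positivity), mul_one_div_cancel (ne_of_gt hp0),
          Real.rpow_one]
      calc u₀ * (N:ℝ) ^ ((1:ℝ)/p) ≤ u₀ * (u / u₀) := by rw [← h2]; gcongr
        _ = u := by field_simp
    have hkey := key14 ρ p hp u₀ hu₀ hmax N hN1
    have hmono : ρ {z | z > u} ≤ ρ (Set.Ioi (u₀ * (N:ℝ) ^ ((1:ℝ)/p))) := by
      rw [hset]; exact measure_mono (Set.Ioi_subset_Ioi htu)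
    refine le_trans (le_trans hmono hkey) (ENNReal.ofReal_le_ofReal ?_)
    rw [hBu]
    have hrpos : 0 < r := by linarith
    rw [div_le_iff₀ hNpos]
    have : (u₀/u)^p = r⁻¹ := by
      rw [hr, show u₀/u = (u/u₀)⁻¹ by rw [inv_div], Real.inv_rpow (by positivity)]
    rw [this]
    rw [mul_comm 2, mul_assoc]
    have hN1' : (1:ℝ) ≤ N := by exact_mod_cast hN1
    have h2N : r ≤ 2 * N := by linarith
    calc (1:ℝ) = r * r⁻¹ := (mul_inv_cancel₀ (ne_of_gt hrpos)).symm
      _ ≤ (2 * N) * r⁻¹ := by gcongr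
      _ = r⁻¹ * (2 * N) := by ring
  · -- small u
    push_neg at h
    have h1 : (1:ℝ) ≤ 2 * u₀ ^ p * u ^ (-p) := by
      rw [hBu]
      have : (1:ℝ) ≤ (u₀/u)^p :=
        Real.one_le_rpow ((one_le_div hu).mpr h.le) hp0.le
      linarith
    calc ρ {z | z > u} ≤ 1 := prob_le_one
      _ = ENNReal.ofReal 1 := by simp
      _ ≤ _ := ENNReal.ofReal_le_ofReal h1
end

section
/- Let ε_1,...,ε_n be i.i.d. Rademacher variables and x an X-valued predictable process with respect to the dyadic filtration. Suppose F ⊆ R^X satisfies the probability bound P(|sup_{f∈F} ∑_{t=1}^n ε_t b_t f(x_t)| > u) ≤ B_p · E[∑_{t=1}^n sup_{f∈F} b_t |f(x_t)|^p] / u^p for every {0,1}-valued predictable truncation process b, where p > 1 and B_p < ∞. Then E[|sup_{f∈F} ∑_{t=1}^n ε_t f(x_t)|] ≤ (1 + B_p · p/(p-1)) · E[(∑_{t=1}^n sup_{f∈F} |f(x_t)|^p)^{1/p}]. -/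
open Finset

/-!
Write `Z = |sup_f ∑_t ε_t f(x_t)|` and `S = ∑_t sup_f |f(x_t)|^p`. For a level `u > 0`, let
`b_t = 1{∑_{s ≤ t} sup_f |f(x_s)|^p ≤ u^p}`; it is predictable because `x` is. On the event
`S^{1/p} ≤ u` nothing is truncated, so `P(Z > u) ≤ P(S^{1/p} > u) + P(Z_b > u)`, where `Z_b` is `Z`
with `ε_t` replaced by `ε_t b_t`. The truncated sum `∑_t b_t sup_f |f(x_t)|^p` is at most
`min(S, u^p)`, so the hypothesis bounds the last term by `B_p E[min(S, u^p)] / u^p`. Integrating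
over `u ∈ (0, ∞)` gives `E Z ≤ E S^{1/p} + B_p E ∫_0^∞ min(S, u^p) u^{-p} du`, and splitting the
inner integral at `u = S^{1/p}` evaluates it to `S^{1/p} + S^{1/p}/(p - 1)`.
-/

open MeasureTheory Set

section PowerTail

variable {S p : ℝ}

lemma min_rpow_div_rpow_eqOn_Ioc (hS : 0 ≤ S) (hp : 0 < p) :
    EqOn (fun u => min S (u ^ p) / u ^ p) 1 (Ioc 0 (S ^ (1 / p))) := by
  intro u ⟨hu0, hu⟩
  have hup : u ^ p ≤ S := by
    simpa [← Real.rpow_mul hS, hp.ne'] using Real.rpow_le_rpow hu0.le hu hp.le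
  simp [min_eq_right hup, (Real.rpow_pos_of_pos hu0 p).ne']

lemma min_rpow_div_rpow_eqOn_Ioi (hS : 0 ≤ S) (hp : 0 < p) :
    EqOn (fun u => min S (u ^ p) / u ^ p) (fun u => S * u ^ (-p)) (Ioi (S ^ (1 / p))) := by
  intro u hu
  have ha : 0 ≤ S ^ (1 / p) := Real.rpow_nonneg hS _
  have hup : S ≤ u ^ p := by
    simpa [← Real.rpow_mul hS, hp.ne'] using Real.rpow_le_rpow ha (le_of_lt hu) hp.le
  simp [min_eq_left hup, Real.rpow_neg (ha.trans hu.le), div_eq_mul_inv]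

lemma min_rpow_div_rpow_eqOn_zero :
    EqOn (fun u : ℝ => min 0 (u ^ p) / u ^ p) 0 (Ioi 0) := by
  intro u hu
  simp [Real.rpow_nonneg (le_of_lt hu)]

lemma integrableOn_min_rpow_div_rpow_Ioc (hS : 0 ≤ S) (hp : 0 < p) :
    IntegrableOn (fun u => min S (u ^ p) / u ^ p) (Ioc 0 (S ^ (1 / p))) :=
  (integrableOn_const measure_Ioc_lt_top.ne).congr_fun
    (min_rpow_div_rpow_eqOn_Ioc hS hp).symm measurableSet_Ioc

lemma integrableOn_min_rpow_div_rpow_Ioi (hS : 0 < S) (hp : 1 < p) :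
    IntegrableOn (fun u => min S (u ^ p) / u ^ p) (Ioi (S ^ (1 / p))) :=
  IntegrableOn.congr_fun
    ((integrableOn_Ioi_rpow_of_lt (show -p < -1 by linarith)
      (Real.rpow_pos_of_pos hS _)).const_mul S)
    (min_rpow_div_rpow_eqOn_Ioi hS.le (by linarith)).symm measurableSet_Ioi

lemma integrableOn_min_rpow_div_rpow (hS : 0 ≤ S) (hp : 1 < p) :
    IntegrableOn (fun u => min S (u ^ p) / u ^ p) (Ioi 0) := by
  rcases hS.eq_or_lt with rfl | hS
  · exact integrableOn_zero.congr_fun min_rpow_div_rpow_eqOn_zero.symm measurableSet_Ioi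
  · have ha : 0 < S ^ (1 / p) := Real.rpow_pos_of_pos hS _
    rw [← Ioc_union_Ioi_eq_Ioi ha.le]
    exact (integrableOn_min_rpow_div_rpow_Ioc hS.le (by linarith)).union
      (integrableOn_min_rpow_div_rpow_Ioi hS hp)

lemma integral_min_rpow_div_rpow (hS : 0 ≤ S) (hp : 1 < p) :
    ∫ u in Ioi 0, min S (u ^ p) / u ^ p = p / (p - 1) * S ^ (1 / p) := by
  have hp0 : 0 < p := by linarith
  rcases hS.eq_or_lt with rfl | hS
  · rw [setIntegral_congr_fun measurableSet_Ioi min_rpow_div_rpow_eqOn_zero]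
    simp [hp0.ne']
  · set a := S ^ (1 / p)
    have ha : 0 < a := Real.rpow_pos_of_pos hS _
    have haS : a ^ p = S := by simp [a, ← Real.rpow_mul hS.le, hp0.ne']
    have hp1 : p - 1 ≠ 0 := by linarith
    have hIoi : S * (-a ^ (-p + 1) / (-p + 1)) = a / (p - 1) := by
      rw [Real.rpow_add ha, Real.rpow_neg ha.le, haS, Real.rpow_one,
        show -p + 1 = -(p - 1) by ring, neg_div_neg_eq]
      field_simp
    rw [← Ioc_union_Ioi_eq_Ioi ha.le, setIntegral_union Ioc_disjoint_Ioi_same measurableSet_Ioi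
      (integrableOn_min_rpow_div_rpow_Ioc hS.le hp0)
      (integrableOn_min_rpow_div_rpow_Ioi hS hp),
      setIntegral_congr_fun measurableSet_Ioc (min_rpow_div_rpow_eqOn_Ioc hS.le hp0),
      setIntegral_congr_fun measurableSet_Ioi (min_rpow_div_rpow_eqOn_Ioi hS.le hp0),
      integral_const_mul, integral_Ioi_rpow_of_lt (by linarith) ha, hIoi, Pi.one_def,
      setIntegral_const, smul_eq_mul, mul_one, Real.volume_real_Ioc_of_le ha.le]
    field_simp
    ring

end PowerTail

lemma integrableOn_Ioi_indicator_Iio (c : ℝ) :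
    IntegrableOn ((Iio c).indicator (1 : ℝ → ℝ)) (Ioi 0) := by
  rw [IntegrableOn, integrable_indicator_iff measurableSet_Iio, IntegrableOn,
    Measure.restrict_restrict measurableSet_Iio, Iio_inter_Ioi]
  exact integrableOn_const measure_Ioo_lt_top.ne

lemma integral_Ioi_indicator_Iio {c : ℝ} (hc : 0 ≤ c) :
    ∫ u in Ioi (0 : ℝ), (Iio c).indicator 1 u = c := by
  rw [setIntegral_indicator measurableSet_Iio, Ioi_inter_Iio]
  simp [hc]

section LayerCake

variable {E : Type*} [Fintype E]

lemma natCast_card_filter_lt_eq_sum_indicator (Z : E → ℝ) (u : ℝ) :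
    (#{e | u < Z e} : ℝ) = ∑ e, (Iio (Z e)).indicator 1 u := by
  rw [natCast_card_filter]
  simp only [Set.indicator_apply, Set.mem_Iio, Pi.one_apply]

lemma integrableOn_card_filter_lt (Z : E → ℝ) :
    IntegrableOn (fun u => (#{e | u < Z e} : ℝ)) (Ioi 0) := by
  simp only [natCast_card_filter_lt_eq_sum_indicator]
  exact integrable_finsetSum _ fun e _ => integrableOn_Ioi_indicator_Iio (Z e)

lemma integral_card_filter_lt {Z : E → ℝ} (hZ : ∀ e, 0 ≤ Z e) :
    ∫ u in Ioi (0 : ℝ), (#{e | u < Z e} : ℝ) = ∑ e, Z e := by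
  simp only [natCast_card_filter_lt_eq_sum_indicator]
  rw [integral_finsetSum _ fun e _ => integrableOn_Ioi_indicator_Iio (Z e)]
  exact sum_congr rfl fun e _ => integral_Ioi_indicator_Iio (hZ e)

lemma card_filter_lt_le_add {Z A Z' : E → ℝ} {u : ℝ} (h : ∀ e, A e ≤ u → Z' e = Z e) :
    (#{e | u < Z e} : ℝ) ≤ #{e | u < A e} + #{e | u < Z' e} := by
  simp only [natCast_card_filter, ← sum_add_distrib]
  gcongr with e
  by_cases hA : u < A e
  · split_ifs <;> norm_num
  · simp [h e (not_lt.1 hA), hA]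

theorem sum_le_of_card_filter_lt_le {Z S : E → ℝ} {p B : ℝ} (hZ : ∀ e, 0 ≤ Z e)
    (hS : ∀ e, 0 ≤ S e) (hp : 1 < p)
    (htail : ∀ u > 0, (#{e | u < Z e} : ℝ)
      ≤ #{e | u < S e ^ (1 / p)} + B * ∑ e, min (S e) (u ^ p) / u ^ p) :
    ∑ e, Z e ≤ (1 + B * (p / (p - 1))) * ∑ e, S e ^ (1 / p) := by
  have hmin : IntegrableOn (fun u => ∑ e, min (S e) (u ^ p) / u ^ p) (Ioi 0) :=
    integrable_finsetSum _ fun e _ => integrableOn_min_rpow_div_rpow (hS e) hp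
  calc ∑ e, Z e = ∫ u in Ioi 0, (#{e | u < Z e} : ℝ) := (integral_card_filter_lt hZ).symm
    _ ≤ ∫ u in Ioi 0, ((#{e | u < S e ^ (1 / p)} : ℝ) + B * ∑ e, min (S e) (u ^ p) / u ^ p) :=
      setIntegral_mono_on (integrableOn_card_filter_lt Z)
        ((integrableOn_card_filter_lt _).add (hmin.const_mul B)) measurableSet_Ioi htail
    _ = ∑ e, S e ^ (1 / p) + B * ∑ e, p / (p - 1) * S e ^ (1 / p) := by
      rw [integral_add (integrableOn_card_filter_lt _) (hmin.const_mul B), integral_const_mul,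
        integral_card_filter_lt fun e => Real.rpow_nonneg (hS e) _,
        integral_finsetSum _ fun e _ => integrableOn_min_rpow_div_rpow (hS e) hp]
      simp only [integral_min_rpow_div_rpow (hS _) hp]
    _ = (1 + B * (p / (p - 1))) * ∑ e, S e ^ (1 / p) := by
      rw [← mul_sum]
      ring

end LayerCake

section Cutoff

variable {T : Type*} [LinearOrder T] [LocallyFiniteOrderBot T]

noncomputable def partialSumCutoff (a : T → ℝ) (c : ℝ) (t : T) : ℝ :=
  if ∑ s ∈ Iic t, a s ≤ c then 1 else 0

lemma partialSumCutoff_eq_zero_or_one (a : T → ℝ) (c : ℝ) (t : T) :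
    partialSumCutoff a c t = 0 ∨ partialSumCutoff a c t = 1 := by
  unfold partialSumCutoff
  split_ifs <;> simp

lemma partialSumCutoff_nonneg (a : T → ℝ) (c : ℝ) (t : T) : 0 ≤ partialSumCutoff a c t := by
  rcases partialSumCutoff_eq_zero_or_one a c t with h | h <;> simp [h]

lemma partialSumCutoff_eq_one_of_sum_le [Fintype T] {a : T → ℝ} {c : ℝ} (ha : ∀ t, 0 ≤ a t)
    (h : ∑ t, a t ≤ c) (t : T) : partialSumCutoff a c t = 1 :=
  if_pos <| (sum_le_sum_of_subset_of_nonneg (subset_univ _) fun s _ _ => ha s).trans h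

lemma sum_partialSumCutoff_mul_le [Fintype T] {a : T → ℝ} {c : ℝ} (ha : ∀ t, 0 ≤ a t)
    (hc : 0 ≤ c) : ∑ t, partialSumCutoff a c t * a t ≤ c := by
  set A : Finset T := {t | ∑ s ∈ Iic t, a s ≤ c}
  have hsum : ∑ t, partialSumCutoff a c t * a t = ∑ t ∈ A, a t := by
    simp [A, partialSumCutoff, sum_filter, ite_mul]
  rw [hsum]
  rcases A.eq_empty_or_nonempty with hA | hA
  · simp [hA, hc]
  · have hmax : ∑ s ∈ Iic (A.max' hA), a s ≤ c := (mem_filter.1 (A.max'_mem hA)).2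
    refine le_trans (sum_le_sum_of_subset_of_nonneg (fun t ht => ?_) fun s _ _ => ha s) hmax
    exact mem_Iic.2 (A.le_max' t ht)

lemma sum_partialSumCutoff_mul_le_min [Fintype T] {a : T → ℝ} {c : ℝ} (ha : ∀ t, 0 ≤ a t)
    (hc : 0 ≤ c) : ∑ t, partialSumCutoff a c t * a t ≤ min (∑ t, a t) c := by
  refine le_min (sum_le_sum fun t _ => ?_) (sum_partialSumCutoff_mul_le ha hc)
  rcases partialSumCutoff_eq_zero_or_one a c t with h | h <;> simp [h, ha t]

end Cutoff

lemma Predictable.partialSumCutoff {n : ℕ} {g : Fin n → (Fin n → Bool) → ℝ} (hg : Predictable g)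
    (c : ℝ) : Predictable fun t e => partialSumCutoff (g · e) c t := by
  intro t e e' h
  have : ∑ s ∈ Iic t, g s e = ∑ s ∈ Iic t, g s e' :=
    sum_congr rfl fun s hs => hg s e e' fun r hr => h r (hr.trans_le (mem_Iic.1 hs))
  simp only [_root_.partialSumCutoff, this]

lemma card_filter_lt_le_of_truncated_tail {X ι : Type*} (f : ι → X → ℝ) {n : ℕ}
    (x : Fin n → (Fin n → Bool) → X) (hx : Predictable x) {p Bp u : ℝ} (hp : 0 < p)
    (hBp : 0 ≤ Bp) (hu : 0 < u)
    (htail : ∀ b : Fin n → (Fin n → Bool) → ℝ, Predictable b →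
      (∀ t e, b t e = 0 ∨ b t e = 1) →
      ((Finset.univ.filter fun e : Fin n → Bool =>
          |⨆ i, ∑ t, sgn (e t) * b t e * f i (x t e)| > u).card : ℝ) / 2 ^ n
        ≤ Bp * (((2 : ℝ) ^ n)⁻¹ * ∑ e : Fin n → Bool,
            ∑ t, ⨆ i, b t e * |f i (x t e)| ^ p) / u ^ p) :
    (#{e | u < |⨆ i, ∑ t, sgn (e t) * f i (x t e)|} : ℝ)
      ≤ #{e | u < (∑ t, ⨆ i, |f i (x t e)| ^ p) ^ (1 / p)}
        + Bp * ∑ e, min (∑ t, ⨆ i, |f i (x t e)| ^ p) (u ^ p) / u ^ p := by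
  set g : Fin n → (Fin n → Bool) → ℝ := fun t e => ⨆ i, |f i (x t e)| ^ p
  have hg : ∀ t e, 0 ≤ g t e := fun t e =>
    Real.iSup_nonneg fun i => Real.rpow_nonneg (abs_nonneg _) p
  have hgx : Predictable g := fun t e e' h => by simp only [g, hx t e e' h]
  set b := fun t e => partialSumCutoff (g · e) (u ^ p) t
  have hS : ∀ e, 0 ≤ ∑ t, g t e := fun e => sum_nonneg fun t _ => hg t e
  have htrunc : ∑ e, ∑ t, ⨆ i, b t e * |f i (x t e)| ^ p ≤ ∑ e, min (∑ t, g t e) (u ^ p) :=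
    sum_le_sum fun e _ => by
      rw [sum_congr rfl fun t _ =>
        (Real.mul_iSup_of_nonneg (partialSumCutoff_nonneg _ _ _) _).symm]
      exact sum_partialSumCutoff_mul_le_min (hg · e) (by positivity)
  have hb := htail b (hgx.partialSumCutoff _) fun t e => partialSumCutoff_eq_zero_or_one _ _ _
  refine (card_filter_lt_le_add (Z' := fun e => |⨆ i, ∑ t, sgn (e t) * b t e * f i (x t e)|)
    fun e he => ?_).trans (add_le_add le_rfl ?_)
  · rw [one_div, Real.rpow_inv_le_iff_of_pos (hS e) hu.le hp] at he
    simp [b, partialSumCutoff_eq_one_of_sum_le (hg · e) he]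
  · set N : ℝ := Nat.cast #{e | u < |⨆ i, ∑ t, sgn (e t) * b t e * f i (x t e)|}
    calc N = 2 ^ n * (N / 2 ^ n) := by field_simp
      _ ≤ 2 ^ n * (Bp * ((2 ^ n)⁻¹ * ∑ e, ∑ t, ⨆ i, b t e * |f i (x t e)| ^ p) / u ^ p) :=
        mul_le_mul_of_nonneg_left hb (by positivity)
      _ = Bp * (∑ e, ∑ t, ⨆ i, b t e * |f i (x t e)| ^ p) / u ^ p := by field_simp
      _ ≤ Bp * (∑ e, min (∑ t, g t e) (u ^ p)) / u ^ p := by gcongr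
      _ = _ := by rw [mul_div_assoc, sum_div]

theorem stmt16_general {X : Type*} {ι : Type*} (f : ι → X → ℝ)
    (n : ℕ) (x : Fin n → (Fin n → Bool) → X) (hx : Predictable x)
    (p Bp : ℝ) (hp : 1 < p) (hBp : 0 ≤ Bp)
    (htail : ∀ b : Fin n → (Fin n → Bool) → ℝ, Predictable b →
      (∀ t e, b t e = 0 ∨ b t e = 1) → ∀ u : ℝ, 0 < u →
      ((Finset.univ.filter fun e : Fin n → Bool =>
          |⨆ i, ∑ t, sgn (e t) * b t e * f i (x t e)| > u).card : ℝ) / 2 ^ n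
        ≤ Bp * (((2 : ℝ) ^ n)⁻¹ * ∑ e : Fin n → Bool,
            ∑ t, ⨆ i, b t e * |f i (x t e)| ^ p) / u ^ p) :
    ((2 : ℝ) ^ n)⁻¹ * ∑ e : Fin n → Bool, |⨆ i, ∑ t, sgn (e t) * f i (x t e)|
      ≤ (1 + Bp * (p / (p - 1)))
          * (((2 : ℝ) ^ n)⁻¹ * ∑ e : Fin n → Bool,
              (∑ t, ⨆ i, |f i (x t e)| ^ p) ^ ((1:ℝ)/p)) := by
  have hS : ∀ e : Fin n → Bool, 0 ≤ ∑ t, ⨆ i, |f i (x t e)| ^ p := fun e =>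
    sum_nonneg fun t _ => Real.iSup_nonneg fun i => Real.rpow_nonneg (abs_nonneg _) p
  have hsum := sum_le_of_card_filter_lt_le (fun e => abs_nonneg _) hS hp fun u hu =>
    card_filter_lt_le_of_truncated_tail f x hx (by linarith) hBp hu fun b hb hb01 =>
      htail b hb hb01 u hu
  rw [mul_left_comm]
  exact mul_le_mul_of_nonneg_left hsum (by positivity)

/-- Integrating a polynomial tail into an in-expectation bound: if for every `{0,1}`-valued
predictable truncation `b` and every `u > 0`,
`P(|sup_f ∑_t ε_t b_t f(x_t)| > u) ≤ B_p E[∑_t sup_f b_t |f(x_t)|^p]/u^p`, then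
`E|sup_f ∑_t ε_t f(x_t)| ≤ (1 + B_p p/(p-1)) E[(∑_t sup_f |f(x_t)|^p)^{1/p}]`. -/
theorem stmt16 {X : Type*} {ι : Type*} [Nonempty ι] (f : ι → X → ℝ)
    (n : ℕ) (x : Fin n → (Fin n → Bool) → X) (hx : Predictable x)
    (p Bp : ℝ) (hp : 1 < p) (hBp : 0 ≤ Bp)
    (htail : ∀ b : Fin n → (Fin n → Bool) → ℝ, Predictable b →
      (∀ t e, b t e = 0 ∨ b t e = 1) → ∀ u : ℝ, 0 < u →
      ((Finset.univ.filter fun e : Fin n → Bool =>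
          |⨆ i, ∑ t, sgn (e t) * b t e * f i (x t e)| > u).card : ℝ) / 2 ^ n
        ≤ Bp * (((2 : ℝ) ^ n)⁻¹ * ∑ e : Fin n → Bool,
            ∑ t, ⨆ i, b t e * |f i (x t e)| ^ p) / u ^ p) :
    ((2 : ℝ) ^ n)⁻¹ * ∑ e : Fin n → Bool, |⨆ i, ∑ t, sgn (e t) * f i (x t e)|
      ≤ (1 + Bp * (p / (p - 1)))
          * (((2 : ℝ) ^ n)⁻¹ * ∑ e : Fin n → Bool,
              (∑ t, ⨆ i, |f i (x t e)| ^ p) ^ ((1:ℝ)/p)) :=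
  stmt16_general f n x hx p Bp hp hBp htail
end
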